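/- arXiv:2104.11941 — 6 statements merged into one kernel-verified Lean document; each statement's English description precedes it below -/
import Mathlib

section
/- Let n ≥ 2. For every ν ∈ B(B_n) with ν ≠ μ̄, writing μ̄ − ν = Σ_{i=1}^n d_i α_i^∨, one has d_1 ≥ 1/2; consequently (μ̄ − (1/2)α_1^∨) − ν is a nonnegative rational combination of the simple coroots, i.e. μ̄ − (1/2)α_1^∨ is the greatest element of B(B_n) ∖ {μ̄} in the dominance order. -/
open Finset

/-- The fundamental coweight `μ̄ = e_1` at node 1 in type `B_n` (0-indexed coordinates). -/
def muB (n : ℕ) : Fin n → ℚ := fun j => if (j : ℕ) = 0 then 1 else 0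

/-- The simple coroots of type `B_n` (0-indexed): `α_i^∨ = e_i − e_{i+1}` for the first `n−1`
nodes and `α_n^∨ = 2 e_n` for the last node. -/
def corootB (n : ℕ) (i : Fin n) : Fin n → ℚ :=
  fun j =>
    if (i : ℕ) + 1 < n then
      (if j = i then 1 else 0) - (if (j : ℕ) = (i : ℕ) + 1 then 1 else 0)
    else (if j = i then 2 else 0)

/-- The Chen–Fargues–Shen description of the Kottwitz set `B(B_n)` for `μ̄ = e_1`:
vectors `ν ∈ ℚ^n` with (i) `ν_1 ≥ ⋯ ≥ ν_n ≥ 0`, (ii) `μ̄ − ν = Σ_i d_i α_i^∨` with all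
`d_i ≥ 0`, and (iii) `d_i ∈ ℤ` for every `i ≤ n−1` with `ν_i ≠ ν_{i+1}`, and `d_n ∈ ℤ` if
`ν_n ≠ 0`. -/
def BsetB (n : ℕ) : Set (Fin n → ℚ) :=
  {ν | (∀ i j : Fin n, (j : ℕ) = (i : ℕ) + 1 → ν j ≤ ν i) ∧
    (∀ i : Fin n, (i : ℕ) = n - 1 → 0 ≤ ν i) ∧
    ∃ d : Fin n → ℚ, (∀ i, 0 ≤ d i) ∧
      (∀ j, muB n j - ν j = ∑ i : Fin n, d i * corootB n i j) ∧
      (∀ i j : Fin n, (j : ℕ) = (i : ℕ) + 1 → ν i ≠ ν j → ∃ m : ℤ, d i = (m : ℚ)) ∧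
      (∀ i : Fin n, (i : ℕ) = n - 1 → ν i ≠ 0 → ∃ m : ℤ, d i = (m : ℚ))}

lemma corootB_diag (n : ℕ) (j : Fin n) :
    corootB n j j = if (j : ℕ) + 1 < n then 1 else 2 := by
  unfold corootB
  rcases lt_or_ge ((j : ℕ) + 1) n with h | h
  · rw [if_pos h, if_pos h, if_pos rfl, if_neg (by omega)]; norm_num
  · have h' : ¬((j : ℕ) + 1 < n) := by omega
    rw [if_neg h', if_neg h', if_pos rfl]

lemma corootB_prev (n : ℕ) (j j' : Fin n) (h : (j' : ℕ) + 1 = (j : ℕ)) :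
    corootB n j' j = -1 := by
  unfold corootB
  rw [if_pos (by omega), if_neg (by simp [Fin.ext_iff]; omega), if_pos (by omega)]
  norm_num

lemma corootB_other (n : ℕ) (i j : Fin n) (hne : i ≠ j) (hne2 : (i : ℕ) + 1 ≠ (j : ℕ)) :
    corootB n i j = 0 := by
  unfold corootB
  by_cases h : (i : ℕ) + 1 < n
  · rw [if_pos h, if_neg (by exact fun hh => hne hh.symm), if_neg (by omega)]; norm_num
  · rw [if_neg h, if_neg (by exact fun hh => hne hh.symm)]

lemma sum_coroot {n : ℕ} (d : Fin n → ℚ) (j : Fin n) :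
    ∑ i : Fin n, d i * corootB n i j =
      (if (j : ℕ) + 1 < n then d j else 2 * d j)
      - (if h : 0 < (j : ℕ) then d ⟨(j : ℕ) - 1, by omega⟩ else 0) := by
  rcases Nat.eq_zero_or_pos (j : ℕ) with h0 | h0
  · rw [dif_neg (by omega)]
    rw [Finset.sum_eq_single j]
    · rw [corootB_diag]; split_ifs <;> ring
    · intro i _ hij
      rw [corootB_other n i j hij (by omega)]; ring
    · intro h; exact absurd (Finset.mem_univ j) h
  · set j' : Fin n := ⟨(j : ℕ) - 1, by omega⟩ with hj'
    have hjj' : j' ≠ j := by simp [hj', Fin.ext_iff]; omega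
    rw [dif_pos h0]
    have hz : ∀ i ∈ Finset.univ, i ∉ ({j', j} : Finset (Fin n)) →
        d i * corootB n i j = 0 := by
      intro i _ hi
      simp only [Finset.mem_insert, Finset.mem_singleton, not_or] at hi
      rw [corootB_other n i j hi.2 (by
        intro hh
        apply hi.1
        simp [hj', Fin.ext_iff]; omega)]
      ring
    rw [← Finset.sum_subset (Finset.subset_univ ({j', j} : Finset (Fin n))) hz]
    rw [Finset.sum_pair hjj']
    rw [corootB_prev n j j' (by simp [hj']; omega), corootB_diag]
    split_ifs <;> ring

/-- Type `B_n`, `n ≥ 2`: for every `ν ∈ B(B_n)` with `ν ≠ μ̄`, writing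
`μ̄ − ν = Σ_i d_i α_i^∨` one has `d_1 ≥ 1/2`, and consequently `(μ̄ − (1/2) α_1^∨) − ν`
is a nonnegative rational combination of the simple coroots, i.e. `μ̄ − (1/2) α_1^∨` is the
greatest element of `B(B_n) ∖ {μ̄}` in the dominance order. -/
theorem muB_sub_half_coroot_maximal (n : ℕ) (hn : 2 ≤ n) :
    ∀ ν ∈ BsetB n, ν ≠ muB n →
      ∀ d : Fin n → ℚ,
        (∀ j, muB n j - ν j = ∑ i : Fin n, d i * corootB n i j) →
        1 / 2 ≤ d ⟨0, by omega⟩ ∧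
        ∃ c : Fin n → ℚ, (∀ i, 0 ≤ c i) ∧
          ∀ j, (muB n j - (1 / 2) * corootB n ⟨0, by omega⟩ j) - ν j
            = ∑ i : Fin n, c i * corootB n i j := by
  intro ν hν hne d hd
  obtain ⟨hdom, hlast, d', hd'0, hd'eq, hint1, _hint2⟩ := hν
  -- simplified coordinate equations
  have heq : ∀ (e : Fin n → ℚ), (∀ j, muB n j - ν j = ∑ i : Fin n, e i * corootB n i j) →
      ∀ j : Fin n, muB n j - ν j =
        (if (j : ℕ) + 1 < n then e j else 2 * e j)
        - (if h : 0 < (j : ℕ) then e ⟨(j : ℕ) - 1, by omega⟩ else 0) := by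
    intro e he j
    rw [he j, sum_coroot]
  -- uniqueness : d = d'
  have key : ∀ k : ℕ, ∀ h : k < n, d ⟨k, h⟩ = d' ⟨k, h⟩ := by
    intro k
    induction k with
    | zero =>
      intro h
      have h1 := heq d hd ⟨0, h⟩
      have h2 := heq d' hd'eq ⟨0, h⟩
      simp only [dif_neg (by simp : ¬(0 < (0 : ℕ)))] at h1 h2
      rw [if_pos (by simpa using by omega : (((⟨0, h⟩ : Fin n) : ℕ)) + 1 < n)] at h1 h2
      linarith
    | succ k ih =>
      intro h
      have hk : k < n := by omega
      have h1 := heq d hd ⟨k + 1, h⟩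
      have h2 := heq d' hd'eq ⟨k + 1, h⟩
      simp only [dif_pos (by omega : 0 < k + 1), Nat.add_sub_cancel] at h1 h2
      rw [ih hk] at h1
      by_cases hc : k + 1 + 1 < n
      · rw [if_pos hc] at h1 h2
        linarith
      · rw [if_neg hc] at h1 h2
        linarith
  have hdnn : ∀ i : Fin n, 0 ≤ d i := by
    intro i
    have := key i.val i.isLt
    rw [show (⟨i.val, i.isLt⟩ : Fin n) = i from rfl] at this
    rw [this]; exact hd'0 i
  have hdd' : ∀ i : Fin n, d i = d' i := by
    intro i
    have := key i.val i.isLt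
    rwa [show (⟨i.val, i.isLt⟩ : Fin n) = i from rfl] at this
  set e0 : Fin n := ⟨0, by omega⟩ with he0
  set e1 : Fin n := ⟨1, by omega⟩ with he1
  -- basic equations
  have heq0 : 1 - ν e0 = d e0 := by
    have h1 := heq d hd e0
    simp only [he0] at h1 ⊢
    rw [dif_neg (by simp)] at h1
    rw [if_pos (by omega)] at h1
    simpa [muB] using h1
  have heq1 : ν e1 ≤ d e0 := by
    have h1 := heq d hd e1
    rw [dif_pos (by simp [he1])] at h1
    have hmu : muB n e1 = 0 := by simp [muB, he1]
    rw [hmu] at h1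
    have hsub : (⟨(e1 : ℕ) - 1, by omega⟩ : Fin n) = e0 := by
      simp [he0, he1, Fin.ext_iff]
    rw [hsub] at h1
    have hnn1 : 0 ≤ d e1 := hdnn e1
    by_cases hc : (e1 : ℕ) + 1 < n
    · rw [if_pos hc] at h1; linarith
    · rw [if_neg hc] at h1; linarith
  -- monotonicity / nonnegativity
  have hstep : ∀ k : ℕ, ∀ hk : k + 1 < n, ν ⟨k + 1, hk⟩ ≤ ν ⟨k, by omega⟩ :=
    fun k hk => hdom ⟨k, by omega⟩ ⟨k + 1, hk⟩ rfl
  have hanti : ∀ b : ℕ, ∀ hb : b < n, ∀ a : ℕ, ∀ ha : a < n, a ≤ b →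
      ν ⟨b, hb⟩ ≤ ν ⟨a, ha⟩ := by
    intro b
    induction b with
    | zero =>
      intro hb a ha hab
      have : a = 0 := by omega
      subst this
      exact le_rfl
    | succ b ih =>
      intro hb a ha hab
      by_cases hc : a = b + 1
      · subst hc; exact le_rfl
      · have hab' : a ≤ b := by omega
        exact le_trans (hstep b hb) (ih (by omega) a ha hab')
  have hnonneg : ∀ k : ℕ, ∀ hk : k < n, 0 ≤ ν ⟨k, hk⟩ := by
    intro k hk
    exact le_trans (hlast ⟨n - 1, by omega⟩ rfl) (hanti (n - 1) (by omega) k hk (by omega))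
  -- main inequality
  have hd0 : 1 / 2 ≤ d e0 := by
    by_contra hlt
    push_neg at hlt
    have hnn0 : 0 ≤ d e0 := hdnn e0
    by_cases hne01 : ν e0 = ν e1
    · have : ν e1 = 1 - d e0 := by rw [← hne01]; linarith
      linarith
    · obtain ⟨m, hm⟩ := hint1 e0 e1 (by simp [he0, he1]) hne01
      have hmd : d e0 = (m : ℚ) := by rw [hdd' e0]; exact hm
      have hm0 : m = 0 := by
        have h1 : (0 : ℚ) ≤ (m : ℚ) := by rw [← hmd]; exact hnn0
        have h2 : (m : ℚ) < 1 := by rw [← hmd]; linarith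
        have h1' : (0 : ℤ) ≤ m := by exact_mod_cast h1
        have h2' : m < 1 := by exact_mod_cast h2
        omega
      have hd00 : d e0 = 0 := by rw [hmd, hm0]; norm_num
      have hν0 : ν e0 = 1 := by linarith
      have hν1 : ν e1 = 0 := by
        have := hnonneg 1 (by omega)
        have h1 : ν e1 ≤ 0 := by rw [hd00] at heq1; exact heq1
        simp only [he1] at *
        linarith
      apply hne
      funext j
      by_cases hj : (j : ℕ) = 0
      · have : j = e0 := by simp [he0, Fin.ext_iff, hj]
        rw [this, hν0]
        simp [muB, he0]
      · have hj1 : 1 ≤ (j : ℕ) := by omega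
        have hle : ν j ≤ ν e1 := hanti j.val j.isLt 1 (by omega) hj1
        have hge : 0 ≤ ν j := by
          have := hnonneg j.val j.isLt
          rwa [show (⟨j.val, j.isLt⟩ : Fin n) = j from rfl] at this
        have : ν j = 0 := by rw [hν1] at hle; linarith
        rw [this]
        simp [muB, hj]
  refine ⟨hd0, fun i => if (i : ℕ) = 0 then d i - 1 / 2 else d i, ?_, ?_⟩
  · intro i
    dsimp only
    by_cases hi : (i : ℕ) = 0
    · rw [if_pos hi]
      have : i = e0 := by simp [he0, Fin.ext_iff, hi]
      rw [this]; linarith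
    · rw [if_neg hi]; exact hdnn i
  · intro j
    dsimp only
    have hsplit : ∀ i : Fin n,
        (if (i : ℕ) = 0 then d i - 1 / 2 else d i) * corootB n i j
          = d i * corootB n i j - (if i = e0 then (1 / 2) * corootB n i j else 0) := by
      intro i
      by_cases hi : i = e0
      · rw [if_pos hi, if_pos (by simp [hi, he0])]; ring
      · rw [if_neg hi, if_neg (by simp [he0, Fin.ext_iff] at hi ⊢; omega)]; ring
    rw [Finset.sum_congr rfl (fun i _ => hsplit i), Finset.sum_sub_distrib,
      Finset.sum_ite_eq' Finset.univ e0 (fun i => (1 / 2) * corootB n i j)]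
    rw [if_pos (Finset.mem_univ e0)]
    have := hd j
    linarith [hd j]
end

section
/- Let n ≥ 2. For every ν ∈ B(C_n) with ν ≠ μ̄, writing μ̄ − ν = Σ_{i=1}^n d_i α_i^∨, one has d_n ≥ 1/2; consequently (μ̄ − (1/2)α_n^∨) − ν is a nonnegative rational combination of the simple coroots, i.e. μ̄ − (1/2)α_n^∨ is the greatest element of B(C_n) ∖ {μ̄} in the dominance order. -/
open Finset

/-- The fundamental coweight `μ̄ = (1/2)(e_1 + ⋯ + e_n)` at node `n` in type `C_n`
(0-indexed coordinates). -/
def muC (n : ℕ) : Fin n → ℚ := fun _ => 1 / 2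

/-- The simple coroots of type `C_n` (0-indexed): `α_i^∨ = e_i − e_{i+1}` for the first `n−1`
nodes and `α_n^∨ = e_n` for the last node. -/
def corootC (n : ℕ) (i : Fin n) : Fin n → ℚ :=
  fun j =>
    if (i : ℕ) + 1 < n then
      (if j = i then 1 else 0) - (if (j : ℕ) = (i : ℕ) + 1 then 1 else 0)
    else (if j = i then 1 else 0)

/-- The Chen–Fargues–Shen description of the Kottwitz set `B(C_n)` for
`μ̄ = (1/2)(e_1 + ⋯ + e_n)`: vectors `ν ∈ ℚ^n` with (i) `ν_1 ≥ ⋯ ≥ ν_n ≥ 0`,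
(ii) `μ̄ − ν = Σ_i d_i α_i^∨` with all `d_i ≥ 0`, and (iii) `d_i ∈ ℤ` for every `i ≤ n−1`
with `ν_i ≠ ν_{i+1}`, and `d_n ∈ ℤ` if `ν_n ≠ 0`. -/
def BsetC (n : ℕ) : Set (Fin n → ℚ) :=
  {ν | (∀ i j : Fin n, (j : ℕ) = (i : ℕ) + 1 → ν j ≤ ν i) ∧
    (∀ i : Fin n, (i : ℕ) = n - 1 → 0 ≤ ν i) ∧
    ∃ d : Fin n → ℚ, (∀ i, 0 ≤ d i) ∧
      (∀ j, muC n j - ν j = ∑ i : Fin n, d i * corootC n i j) ∧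
      (∀ i j : Fin n, (j : ℕ) = (i : ℕ) + 1 → ν i ≠ ν j → ∃ m : ℤ, d i = (m : ℚ)) ∧
      (∀ i : Fin n, (i : ℕ) = n - 1 → ν i ≠ 0 → ∃ m : ℤ, d i = (m : ℚ))}

lemma coroot_eval (n : ℕ) (e : Fin n → ℚ) (j : Fin n) :
    ∑ i : Fin n, e i * corootC n i j =
      e j - (if h : 0 < (j : ℕ) then e ⟨(j:ℕ)-1, by omega⟩ else 0) := by
  have hc : ∀ i : Fin n, corootC n i j =
      (if j = i then (1:ℚ) else 0) - (if (j:ℕ) = (i:ℕ)+1 then 1 else 0) := by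
    intro i
    unfold corootC
    by_cases h : (i:ℕ)+1 < n
    · simp [h]
    · have hj : (j:ℕ) ≠ (i:ℕ)+1 := by have := j.isLt; omega
      simp [h, hj]
  simp_rw [hc, mul_sub]
  rw [Finset.sum_sub_distrib]
  congr 1
  · simp [mul_ite, Finset.sum_ite_eq]
  · by_cases h : 0 < (j:ℕ)
    · have hcond : ∀ i : Fin n, ((j:ℕ) = (i:ℕ)+1) ↔ ((⟨(j:ℕ)-1, by omega⟩ : Fin n) = i) := by
        intro i; rw [Fin.ext_iff]; simp; omega
      simp_rw [mul_ite, mul_one, mul_zero, hcond]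
      rw [Finset.sum_ite_eq]
      simp [h]
    · have : ∀ i : Fin n, (j:ℕ) ≠ (i:ℕ)+1 := by intro i; omega
      simp [this, h]

/-- Type `C_n`, `n ≥ 2`: for every `ν ∈ B(C_n)` with `ν ≠ μ̄`, writing
`μ̄ − ν = Σ_i d_i α_i^∨` one has `d_n ≥ 1/2`, and consequently `(μ̄ − (1/2) α_n^∨) − ν`
is a nonnegative rational combination of the simple coroots, i.e. `μ̄ − (1/2) α_n^∨` is the
greatest element of `B(C_n) ∖ {μ̄}` in the dominance order. -/
theorem muC_sub_half_coroot_maximal (n : ℕ) (hn : 2 ≤ n) :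
    ∀ ν ∈ BsetC n, ν ≠ muC n →
      ∀ d : Fin n → ℚ,
        (∀ j, muC n j - ν j = ∑ i : Fin n, d i * corootC n i j) →
        1 / 2 ≤ d ⟨n - 1, by omega⟩ ∧
        ∃ c : Fin n → ℚ, (∀ i, 0 ≤ c i) ∧
          ∀ j, (muC n j - (1 / 2) * corootC n ⟨n - 1, by omega⟩ j) - ν j
            = ∑ i : Fin n, c i * corootC n i j := by
  intro ν hν hne d hdeq
  obtain ⟨hmono, -, d', hd'0, hd'eq, -, hlast⟩ := hν
  have key : ∀ (e : Fin n → ℚ),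
      (∀ j, muC n j - ν j = ∑ i : Fin n, e i * corootC n i j) →
      ∀ j : Fin n, muC n j - ν j
        = e j - (if h : 0 < (j:ℕ) then e ⟨(j:ℕ)-1, by omega⟩ else 0) := by
    intro e he j; rw [he j, coroot_eval]
  have keyd := key d hdeq
  have keyd' := key d' hd'eq
  have huniq : ∀ k : ℕ, ∀ h : k < n, d ⟨k, h⟩ = d' ⟨k, h⟩ := by
    intro k
    induction k with
    | zero =>
      intro h
      have h1 := keyd ⟨0, h⟩
      have h2 := keyd' ⟨0, h⟩
      simp at h1 h2
      linarith
    | succ k ih =>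
      intro h
      have hk : k < n := by omega
      have h1 := keyd ⟨k+1, h⟩
      have h2 := keyd' ⟨k+1, h⟩
      simp at h1 h2
      have := ih hk
      linarith
  have hjn : n - 1 < n := by omega
  have hjp : n - 2 < n := by omega
  set jn : Fin n := ⟨n-1, hjn⟩ with hjndef
  set jp : Fin n := ⟨n-2, hjp⟩ with hjpdef
  have hstep : (1:ℚ)/2 - ν jn = d' jn - d' jp := by
    have h := keyd' jn
    rw [dif_pos (by simp [hjndef]; omega)] at h
    have hval : ((jn:ℕ) - 1) = n - 2 := by simp [hjndef]; omega
    simp only [hval] at h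
    simpa [muC] using h
  have hd1 : (1:ℚ)/2 ≤ d' jn := by
    by_contra hlt
    push_neg at hlt
    by_cases hν0 : ν jn = 0
    · have := hd'0 jp
      rw [hν0] at hstep
      linarith
    · obtain ⟨m, hm⟩ := hlast jn (by simp [hjndef]) hν0
      have hm0 : m = 0 := by
        have h1 : (0:ℚ) ≤ (m:ℚ) := by rw [← hm]; exact hd'0 jn
        have h2 : (m:ℚ) < 1 := by rw [← hm]; linarith
        have h1' : (0:ℤ) ≤ m := by exact_mod_cast h1
        have h2' : m < 1 := by exact_mod_cast h2
        omega
      have hdn0 : d' jn = 0 := by rw [hm, hm0]; norm_num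
      have hνhalf : (1:ℚ)/2 ≤ ν jn := by
        have := hd'0 jp
        rw [hdn0] at hstep
        linarith
      have hdom : ∀ k : ℕ, k < n → ν jn ≤ ν ⟨n-1-k, by omega⟩ := by
        intro k
        induction k with
        | zero => intro _; simp [hjndef]
        | succ k ih =>
          intro hk
          have hk' : k < n := by omega
          have h1 := ih hk'
          by_cases hbig : n - 1 ≤ k
          · have : n - 1 - (k+1) = n - 1 - k := by omega
            rw [show (⟨n-1-(k+1), by omega⟩ : Fin n) = ⟨n-1-k, by omega⟩ from Fin.ext this]
            exact h1
          · have := hmono ⟨n-1-(k+1), by omega⟩ ⟨n-1-k, by omega⟩ (by simp; omega)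
            linarith
      have hall : ∀ j : Fin n, (1:ℚ)/2 ≤ ν j := by
        intro j
        have hjlt := j.isLt
        have hk := hdom (n-1-(j:ℕ)) (by omega)
        have heq : (⟨n-1-(n-1-(j:ℕ)), by omega⟩ : Fin n) = j := Fin.ext (by simp; omega)
        rw [heq] at hk
        linarith
      have hforced : ∀ k : ℕ, ∀ h : k < n, ν ⟨k,h⟩ = 1/2 ∧ d' ⟨k,h⟩ = 0 := by
        intro k
        induction k with
        | zero =>
          intro h
          have h2 := keyd' ⟨0, h⟩
          simp [muC] at h2
          have := hd'0 ⟨0, h⟩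
          have := hall ⟨0, h⟩
          constructor <;> linarith
        | succ k ih =>
          intro h
          have hk : k < n := by omega
          obtain ⟨ihv, ihd⟩ := ih hk
          have h2 := keyd' ⟨k+1, h⟩
          simp [muC] at h2
          rw [ihd] at h2
          have := hd'0 ⟨k+1, h⟩
          have := hall ⟨k+1, h⟩
          constructor <;> linarith
      apply hne
      funext j
      have := (hforced (j:ℕ) j.isLt).1
      rw [Fin.eta] at this
      simpa [muC] using this
  have hdd' : d jn = d' jn := huniq (n-1) hjn
  refine ⟨by rw [hdd']; exact hd1, ?_⟩
  refine ⟨fun i => if (i:ℕ) = n-1 then d i - 1/2 else d i, ?_, ?_⟩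
  · intro i
    by_cases h : (i:ℕ) = n-1
    · have hi : i = jn := Fin.ext h
      rw [hi]
      show 0 ≤ (if ((jn:ℕ) = n-1) then d jn - 1/2 else d jn)
      rw [if_pos (show ((jn:ℕ) = n-1) by simp [hjndef]), hdd']
      linarith
    · simp only [h, if_neg h]
      have := huniq (i:ℕ) i.isLt
      rw [Fin.eta] at this
      rw [this]
      exact hd'0 i
  · intro j
    have hsum : ∑ i : Fin n, (if (i:ℕ) = n-1 then d i - 1/2 else d i) * corootC n i j
        = (∑ i : Fin n, d i * corootC n i j) - (1/2) * corootC n jn j := by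
      have hterm : ∀ i : Fin n, (if (i:ℕ) = n-1 then d i - 1/2 else d i) * corootC n i j
          = d i * corootC n i j - (if i = jn then (1/2) * corootC n i j else 0) := by
        intro i
        by_cases h : (i:ℕ) = n-1
        · have hi : i = jn := Fin.ext h
          rw [hi, if_pos (show ((jn:ℕ) = n-1) by simp [hjndef]), if_pos rfl]
          ring
        · have hi : i ≠ jn := by intro e; exact h (by rw [e])
          simp [h, hi]
      simp_rw [hterm]
      rw [Finset.sum_sub_distrib, Finset.sum_ite_eq']
      simp
    rw [hsum, ← hdeq j]
    ring
end

section
/- Let n ≥ 4 and μ̄ = (1/2)(e_1 + ⋯ + e_n) (the half-spin fundamental coweight at node n). For every ν ∈ B(D_n, μ̄) with ν ≠ μ̄, writing μ̄ − ν = Σ_{i=1}^n d_i α_i^∨, one has d_n ≥ 1/2; consequently (μ̄ − (1/2)α_n^∨) − ν is a nonnegative rational combination of the simple coroots, i.e. μ̄ − (1/2)α_n^∨ is the greatest element of B(D_n, μ̄) ∖ {μ̄} in the dominance order. -/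
open Finset

/-- The simple coroots of type `D_n` (0-indexed): `α_i^∨ = e_i − e_{i+1}` for the first `n−1`
nodes and `α_n^∨ = e_{n−1} + e_n` for the last node. -/
def corootD (n : ℕ) (i : Fin n) : Fin n → ℚ :=
  fun j =>
    if (i : ℕ) + 1 < n then
      (if j = i then 1 else 0) - (if (j : ℕ) = (i : ℕ) + 1 then 1 else 0)
    else (if (j : ℕ) = n - 2 then 1 else 0) + (if (j : ℕ) = n - 1 then 1 else 0)

lemma sumCorootD (n : ℕ) (hn : 4 ≤ n) (d : Fin n → ℚ) (m : ℕ) (hm : m < n) :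
    ∑ i : Fin n, d i * corootD n i ⟨m, hm⟩ =
      (if m + 1 < n then d ⟨m, hm⟩ else 0)
      - (if 1 ≤ m then d ⟨m - 1, by omega⟩ else 0)
      + ((if m = n - 2 then (1 : ℚ) else 0) + (if m = n - 1 then (1 : ℚ) else 0))
          * d ⟨n - 1, by omega⟩ := by
  classical
  have hLmem : (⟨n - 1, by omega⟩ : Fin n) ∈ (univ : Finset (Fin n)) := mem_univ _
  rw [← Finset.add_sum_erase _ _ hLmem]
  have h1 : d ⟨n - 1, by omega⟩ * corootD n ⟨n - 1, by omega⟩ ⟨m, hm⟩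
      = ((if m = n - 2 then (1 : ℚ) else 0) + (if m = n - 1 then (1 : ℚ) else 0))
          * d ⟨n - 1, by omega⟩ := by
    unfold corootD
    rw [if_neg (show ¬ ((⟨n - 1, by omega⟩ : Fin n) : ℕ) + 1 < n by simp; omega)]
    have : ((⟨m, hm⟩ : Fin n) : ℕ) = m := rfl
    rw [this]; ring
  rw [h1]
  have step : ∀ i ∈ ((univ : Finset (Fin n)).erase ⟨n - 1, by omega⟩),
      d i * corootD n i ⟨m, hm⟩ =
        (if (⟨m, hm⟩ : Fin n) = i then d i else 0) - (if m = (i : ℕ) + 1 then d i else 0) := by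
    intro i hi
    have hne := Finset.ne_of_mem_erase hi
    have hin : (i : ℕ) + 1 < n := by
      rcases Nat.lt_or_ge ((i : ℕ) + 1) n with h | h
      · exact h
      · exact absurd (Fin.ext (by simp; omega)) hne
    unfold corootD
    rw [if_pos hin]
    have hjm : ((⟨m, hm⟩ : Fin n) : ℕ) = m := rfl
    rw [hjm]
    split_ifs <;> ring
  rw [Finset.sum_congr rfl step, Finset.sum_sub_distrib]
  have s1 : ∑ i ∈ ((univ : Finset (Fin n)).erase ⟨n - 1, by omega⟩),
      (if (⟨m, hm⟩ : Fin n) = i then d i else 0) = if m + 1 < n then d ⟨m, hm⟩ else 0 := by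
    rw [Finset.sum_ite_eq]
    by_cases h : m + 1 < n
    · rw [if_pos h, if_pos]
      exact Finset.mem_erase.mpr ⟨by simp [Fin.ext_iff]; omega, mem_univ _⟩
    · rw [if_neg h, if_neg]
      intro hmem
      exact (Finset.mem_erase.mp hmem).1 (Fin.ext (by simp; omega))
  have s2 : ∑ i ∈ ((univ : Finset (Fin n)).erase ⟨n - 1, by omega⟩),
      (if m = (i : ℕ) + 1 then d i else 0) = if 1 ≤ m then d ⟨m - 1, by omega⟩ else 0 := by
    by_cases hm1 : 1 ≤ m
    · rw [if_pos hm1]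
      have conv1 : ∀ i ∈ ((univ : Finset (Fin n)).erase ⟨n - 1, by omega⟩),
          (if m = (i : ℕ) + 1 then d i else 0)
            = (if (⟨m - 1, by omega⟩ : Fin n) = i then d i else 0) := by
        intro i _
        congr 1
        simp only [eq_iff_iff, Fin.ext_iff]
        constructor <;> intro h <;> omega
      rw [Finset.sum_congr rfl conv1, Finset.sum_ite_eq, if_pos]
      exact Finset.mem_erase.mpr ⟨by simp [Fin.ext_iff]; omega, mem_univ _⟩
    · rw [if_neg hm1]
      apply Finset.sum_eq_zero
      intro i _
      rw [if_neg (by omega)]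
  rw [s1, s2]; ring

lemma corootD_unique (n : ℕ) (hn : 4 ≤ n) (d d' : Fin n → ℚ)
    (h : ∀ j : Fin n, ∑ i : Fin n, d i * corootD n i j = ∑ i : Fin n, d' i * corootD n i j) :
    d = d' := by
  have E : ∀ (m : ℕ) (hm : m < n),
      (if m + 1 < n then d ⟨m, hm⟩ else 0) - (if 1 ≤ m then d ⟨m - 1, by omega⟩ else 0)
        + ((if m = n - 2 then (1 : ℚ) else 0) + (if m = n - 1 then (1 : ℚ) else 0))
            * d ⟨n - 1, by omega⟩
      = (if m + 1 < n then d' ⟨m, hm⟩ else 0) - (if 1 ≤ m then d' ⟨m - 1, by omega⟩ else 0)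
        + ((if m = n - 2 then (1 : ℚ) else 0) + (if m = n - 1 then (1 : ℚ) else 0))
            * d' ⟨n - 1, by omega⟩ := by
    intro m hm
    have := h ⟨m, hm⟩
    rw [sumCorootD n hn d m hm, sumCorootD n hn d' m hm] at this
    exact this
  have key : ∀ m : ℕ, m ≤ n - 3 → ∀ (hm : m < n), d ⟨m, hm⟩ = d' ⟨m, hm⟩ := by
    intro m
    induction m with
    | zero =>
        intro _ hm
        have e := E 0 hm
        simp only [if_pos (show 0 + 1 < n by omega), if_neg (show ¬ (1 : ℕ) ≤ 0 by omega),
          if_neg (show ¬ (0 : ℕ) = n - 2 by omega), if_neg (show ¬ (0 : ℕ) = n - 1 by omega)]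
          at e
        linarith
    | succ k ih =>
        intro hk hm
        have e := E (k + 1) hm
        simp only [if_pos (show k + 1 + 1 < n by omega), if_pos (show 1 ≤ k + 1 by omega),
          if_neg (show ¬ k + 1 = n - 2 by omega), if_neg (show ¬ k + 1 = n - 1 by omega),
          Nat.add_sub_cancel] at e
        rw [ih (by omega)] at e
        linarith
  have e1 := E (n - 1) (by omega)
  simp only [if_neg (show ¬ (n - 1 + 1 < n) by omega), if_pos (show 1 ≤ n - 1 by omega),
    if_neg (show ¬ n - 1 = n - 2 by omega), if_pos (show n - 1 = n - 1 from rfl), if_true] at e1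
  have e2 := E (n - 2) (by omega)
  simp only [if_pos (show n - 2 + 1 < n by omega), if_pos (show 1 ≤ n - 2 by omega),
    if_pos (show n - 2 = n - 2 from rfl), if_neg (show ¬ n - 2 = n - 1 by omega), if_true] at e2
  -- normalize the shifted indices
  have hidx1 : ∀ (h : n - 1 - 1 < n), (⟨n - 1 - 1, h⟩ : Fin n) = ⟨n - 2, by omega⟩ := by
    intro h; simp only [Fin.mk.injEq]; omega
  rw [hidx1] at e1
  rw [key (n - 2 - 1) (by omega)] at e2
  have hL : d ⟨n - 1, by omega⟩ = d' ⟨n - 1, by omega⟩ := by linarith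
  have hP : d ⟨n - 2, by omega⟩ = d' ⟨n - 2, by omega⟩ := by linarith
  funext i
  have hi : (i : ℕ) < n := i.isLt
  rcases Nat.lt_or_ge (i : ℕ) (n - 2) with hc | hc
  · exact key (i : ℕ) (by omega) i.isLt
  · rcases Nat.lt_or_ge (i : ℕ) (n - 1) with hc2 | hc2
    · have : i = ⟨n - 2, by omega⟩ := Fin.ext (by simp; omega)
      rw [this]; exact hP
    · have : i = ⟨n - 1, by omega⟩ := Fin.ext (by simp; omega)
      rw [this]; exact hL

/-- The Chen–Fargues–Shen description of the Kottwitz set `B(D_n, μ̄)` for a minuscule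
fundamental coweight `μ̄` of type `D_n`: vectors `ν ∈ ℚ^n` with
(i) `ν_1 ≥ ⋯ ≥ ν_{n−1} ≥ ν_n` and `ν_{n−1} + ν_n ≥ 0`,
(ii) `μ̄ − ν = Σ_i d_i α_i^∨` with all `d_i ≥ 0`, and
(iii) `d_i ∈ ℤ` for every `i ≤ n−1` with `ν_i ≠ ν_{i+1}`, and `d_n ∈ ℤ` if
`ν_{n−1} + ν_n ≠ 0`. -/
def BsetD (n : ℕ) (μ : Fin n → ℚ) : Set (Fin n → ℚ) :=
  {ν | (∀ i j : Fin n, (j : ℕ) = (i : ℕ) + 1 → ν j ≤ ν i) ∧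
    (∀ i j : Fin n, (i : ℕ) = n - 2 → (j : ℕ) = n - 1 → 0 ≤ ν i + ν j) ∧
    ∃ d : Fin n → ℚ, (∀ i, 0 ≤ d i) ∧
      (∀ j, μ j - ν j = ∑ i : Fin n, d i * corootD n i j) ∧
      (∀ i j : Fin n, (j : ℕ) = (i : ℕ) + 1 → ν i ≠ ν j → ∃ m : ℤ, d i = (m : ℚ)) ∧
      (∀ k : Fin n, (k : ℕ) = n - 1 →
        ∀ i j : Fin n, (i : ℕ) = n - 2 → (j : ℕ) = n - 1 → ν i + ν j ≠ 0 →
          ∃ m : ℤ, d k = (m : ℚ))}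

/-- Type `D_n`, `n ≥ 4`, `μ̄ = (1/2)(e_1 + ⋯ + e_n)` (the half-spin fundamental coweight at
node `n`): for every `ν ∈ B(D_n, μ̄)` with `ν ≠ μ̄`, writing `μ̄ − ν = Σ_i d_i α_i^∨` one has
`d_n ≥ 1/2`, and consequently `(μ̄ − (1/2) α_n^∨) − ν` is a nonnegative rational combination
of the simple coroots, i.e. `μ̄ − (1/2) α_n^∨` is the greatest element of
`B(D_n, μ̄) ∖ {μ̄}` in the dominance order. -/
theorem muDn_sub_half_coroot_maximal (n : ℕ) (hn : 4 ≤ n) :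
    ∀ ν ∈ BsetD n (fun _ => 1 / 2),
      ν ≠ (fun _ : Fin n => (1 / 2 : ℚ)) →
      ∀ d : Fin n → ℚ,
        (∀ j, (1 / 2 : ℚ) - ν j = ∑ i : Fin n, d i * corootD n i j) →
        1 / 2 ≤ d ⟨n - 1, by omega⟩ ∧
        ∃ c : Fin n → ℚ, (∀ i, 0 ≤ c i) ∧
          ∀ j, ((1 / 2 : ℚ) - (1 / 2) * corootD n ⟨n - 1, by omega⟩ j) - ν j
            = ∑ i : Fin n, c i * corootD n i j := by
  classical
  intro ν hν hne d hd
  obtain ⟨hdom, _hpos, d', hd'0, hd'eq, _hint, hint2⟩ := hν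
  have hdd : d = d' := corootD_unique n hn d d' (fun j => (hd j).symm.trans (hd'eq j))
  subst hdd
  have hS : ∀ (m : ℕ) (hm : m < n), (1 : ℚ) / 2 - ν ⟨m, hm⟩ =
      (if m + 1 < n then d ⟨m, hm⟩ else 0)
      - (if 1 ≤ m then d ⟨m - 1, by omega⟩ else 0)
      + ((if m = n - 2 then (1 : ℚ) else 0) + (if m = n - 1 then (1 : ℚ) else 0))
          * d ⟨n - 1, by omega⟩ :=
    fun m hm => (hd ⟨m, hm⟩).trans (sumCorootD n hn d m hm)
  have h0 := hS 0 (by omega)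
  simp only [if_pos (show 0 + 1 < n by omega), if_neg (show ¬ (1 : ℕ) ≤ 0 by omega),
    if_neg (show ¬ (0 : ℕ) = n - 2 by omega), if_neg (show ¬ (0 : ℕ) = n - 1 by omega)] at h0
  have hA := hS (n - 2) (by omega)
  simp only [if_pos (show n - 2 + 1 < n by omega), if_pos (show 1 ≤ n - 2 by omega),
    if_pos (show n - 2 = n - 2 from rfl), if_neg (show ¬ n - 2 = n - 1 by omega), if_true] at hA
  have hB := hS (n - 1) (by omega)
  simp only [if_neg (show ¬ (n - 1 + 1 < n) by omega), if_pos (show 1 ≤ n - 1 by omega),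
    if_neg (show ¬ n - 1 = n - 2 by omega), if_pos (show n - 1 = n - 1 from rfl), if_true] at hB
  have hidx1 : ∀ (h : n - 1 - 1 < n), (⟨n - 1 - 1, h⟩ : Fin n) = ⟨n - 2, by omega⟩ := by
    intro h; simp only [Fin.mk.injEq]; omega
  rw [hidx1] at hB
  have chain : ∀ (a b : ℕ) (ha : a < n) (hb : b < n), a ≤ b → ν ⟨b, hb⟩ ≤ ν ⟨a, ha⟩ := by
    intro a b ha
    induction b with
    | zero =>
        intro hb hab
        have : a = 0 := by omega
        subst this; exact le_refl _
    | succ k ih =>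
        intro hb hab
        rcases Nat.lt_or_ge a (k + 1) with h | h
        · have hk : k < n := by omega
          exact le_trans (hdom ⟨k, hk⟩ ⟨k + 1, hb⟩ rfl) (ih hk (by omega))
        · have : a = k + 1 := by omega
          subst this; exact le_refl _
  have hdL : (1 : ℚ) / 2 ≤ d ⟨n - 1, by omega⟩ := by
    by_cases hzero : ν (⟨n - 2, by omega⟩ : Fin n) + ν (⟨n - 1, by omega⟩ : Fin n) = 0
    · have h3 := hd'0 (⟨n - 2 - 1, by omega⟩ : Fin n)
      linarith
    · obtain ⟨m, hm⟩ := hint2 ⟨n - 1, by omega⟩ rfl ⟨n - 2, by omega⟩ ⟨n - 1, by omega⟩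
        rfl rfl hzero
    -- 0 ≤ m
      have hm0 : (0 : ℚ) ≤ (m : ℚ) := by
        have := hd'0 (⟨n - 1, by omega⟩ : Fin n)
        linarith [hm]
      have hm0' : (0 : ℤ) ≤ m := by exact_mod_cast hm0
      by_cases hm1 : m = 0
      · exfalso; apply hne; funext j
        have hdl0 : d (⟨n - 1, by omega⟩ : Fin n) = 0 := by
          rw [hm1] at hm; simpa using hm
        have hnu1 : (1 : ℚ) / 2 ≤ ν ⟨n - 1, by omega⟩ := by
          have := hd'0 (⟨n - 2, by omega⟩ : Fin n)
          linarith
        have hnu0 : ν ⟨0, by omega⟩ ≤ 1 / 2 := by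
          have := hd'0 (⟨0, by omega⟩ : Fin n)
          have h4 := hd'0 (⟨n - 1, by omega⟩ : Fin n)
          linarith
        have c1 := chain 0 j.val (by omega) j.isLt (by omega)
        have c2 := chain j.val (n - 1) j.isLt (by omega) (by omega)
        show ν j = 1 / 2
        have hj : ν j = ν ⟨j.val, j.isLt⟩ := rfl
        rw [hj]; linarith
      · have hm2 : (1 : ℤ) ≤ m := by omega
        have hm2' : (1 : ℚ) ≤ (m : ℚ) := by exact_mod_cast hm2
        linarith [hm]
  refine ⟨hdL, ?_⟩
  refine ⟨Function.update d (⟨n - 1, by omega⟩ : Fin n) (d ⟨n - 1, by omega⟩ - 1 / 2), ?_, ?_⟩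
  · intro i
    rcases eq_or_ne i (⟨n - 1, by omega⟩ : Fin n) with hi | hi
    · rw [hi, Function.update_self]; linarith
    · rw [Function.update_of_ne hi]; exact hd'0 i
  · intro j
    have hsum : ∑ i : Fin n,
          Function.update d (⟨n - 1, by omega⟩ : Fin n) (d ⟨n - 1, by omega⟩ - 1 / 2) i
            * corootD n i j
        = (∑ i : Fin n, d i * corootD n i j)
          - (1 / 2) * corootD n (⟨n - 1, by omega⟩ : Fin n) j := by
      have hfun : (fun i => Function.update d (⟨n - 1, by omega⟩ : Fin n)
              (d ⟨n - 1, by omega⟩ - 1 / 2) i * corootD n i j)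
          = Function.update (fun i => d i * corootD n i j) (⟨n - 1, by omega⟩ : Fin n)
              ((d ⟨n - 1, by omega⟩ - 1 / 2) * corootD n (⟨n - 1, by omega⟩ : Fin n) j) := by
        funext i
        rcases eq_or_ne i (⟨n - 1, by omega⟩ : Fin n) with hi | hi
        · rw [hi]; rw [Function.update_self, Function.update_self]
        · rw [Function.update_of_ne hi, Function.update_of_ne hi]
      rw [hfun, Finset.sum_update_of_mem (mem_univ _),
        Finset.sum_sdiff_eq_sub (Finset.singleton_subset_iff.mpr (mem_univ _)),
        Finset.sum_singleton]
      ring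
    rw [hsum, ← hd j]
    ring
end

section
/- The vector c* := e_1 − (1/2) A e_1 lies in B(E_6), and for every c ∈ B(E_6) with c ≠ e_1, writing e_1 − c = A d, one has d_1 ≥ 1/2. Consequently c* − c = A(d − (1/2)e_1) with d − (1/2)e_1 entrywise nonnegative, i.e. c* is the greatest element of B(E_6) ∖ {e_1} in the dominance order (c ⪯ c' iff A^{-1}(c' − c) has all entries ≥ 0). -/
open Finset

/-- The Cartan matrix of type `E_6` in Bourbaki numbering (0-indexed: node `i` here is
Bourbaki node `i+1`); the edges of the Dynkin diagram are `{1,3}, {3,4}, {4,5}, {5,6}, {2,4}`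
(Bourbaki), i.e. `{0,2}, {2,3}, {3,4}, {4,5}, {1,3}` (0-indexed). -/
def cartanE6 : Matrix (Fin 6) (Fin 6) ℚ :=
  fun i j =>
    if i = j then 2
    else if ((i : ℕ) = 0 ∧ (j : ℕ) = 2) ∨ ((i : ℕ) = 2 ∧ (j : ℕ) = 0)
        ∨ ((i : ℕ) = 2 ∧ (j : ℕ) = 3) ∨ ((i : ℕ) = 3 ∧ (j : ℕ) = 2)
        ∨ ((i : ℕ) = 3 ∧ (j : ℕ) = 4) ∨ ((i : ℕ) = 4 ∧ (j : ℕ) = 3)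
        ∨ ((i : ℕ) = 4 ∧ (j : ℕ) = 5) ∨ ((i : ℕ) = 5 ∧ (j : ℕ) = 4)
        ∨ ((i : ℕ) = 1 ∧ (j : ℕ) = 3) ∨ ((i : ℕ) = 3 ∧ (j : ℕ) = 1)
      then -1 else 0

/-- The minuscule fundamental coweight `μ̄ = e_1` of `E_6` (node 1 in Bourbaki numbering),
in the coordinates given by the basis of fundamental coweights. -/
def muE6 : Fin 6 → ℚ := fun j => if j = 0 then 1 else 0

/-- The Chen–Fargues–Shen description of the Kottwitz set `B(E_6)` for `μ̄ = e_1`: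
vectors `c ∈ ℚ^6` (coordinates in the basis of fundamental coweights) with
(i) `c_j ≥ 0` for all `j`, (ii) `e_1 − c = A d` with all `d_i ≥ 0`, and
(iii) `d_j ∈ ℤ` for every `j` with `c_j ≠ 0`. -/
def BsetE6 : Set (Fin 6 → ℚ) :=
  {c | (∀ j, 0 ≤ c j) ∧
    ∃ d : Fin 6 → ℚ, (∀ i, 0 ≤ d i) ∧
      (∀ j, muE6 j - c j = ∑ i, cartanE6 j i * d i) ∧
      (∀ j, c j ≠ 0 → ∃ m : ℤ, d j = (m : ℚ))}

lemma sE0 (d : Fin 6 → ℚ) : ∑ i, cartanE6 0 i * d i = 2*d 0 - d 2 := by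
  rw [Fin.sum_univ_six]
  norm_num [show cartanE6 0 0 = 2 from rfl, show cartanE6 0 1 = 0 from rfl,
    show cartanE6 0 2 = -1 from rfl, show cartanE6 0 3 = 0 from rfl,
    show cartanE6 0 4 = 0 from rfl, show cartanE6 0 5 = 0 from rfl]
  ring

lemma sE1 (d : Fin 6 → ℚ) : ∑ i, cartanE6 1 i * d i = 2*d 1 - d 3 := by
  rw [Fin.sum_univ_six]
  norm_num [show cartanE6 1 0 = 0 from rfl, show cartanE6 1 1 = 2 from rfl,
    show cartanE6 1 2 = 0 from rfl, show cartanE6 1 3 = -1 from rfl,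
    show cartanE6 1 4 = 0 from rfl, show cartanE6 1 5 = 0 from rfl]
  ring

lemma sE2 (d : Fin 6 → ℚ) : ∑ i, cartanE6 2 i * d i = -d 0 + 2*d 2 - d 3 := by
  rw [Fin.sum_univ_six]
  norm_num [show cartanE6 2 0 = -1 from rfl, show cartanE6 2 1 = 0 from rfl,
    show cartanE6 2 2 = 2 from rfl, show cartanE6 2 3 = -1 from rfl,
    show cartanE6 2 4 = 0 from rfl, show cartanE6 2 5 = 0 from rfl]
  ring

lemma sE3 (d : Fin 6 → ℚ) : ∑ i, cartanE6 3 i * d i = -d 1 - d 2 + 2*d 3 - d 4 := by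
  rw [Fin.sum_univ_six]
  norm_num [show cartanE6 3 0 = 0 from rfl, show cartanE6 3 1 = -1 from rfl,
    show cartanE6 3 2 = -1 from rfl, show cartanE6 3 3 = 2 from rfl,
    show cartanE6 3 4 = -1 from rfl, show cartanE6 3 5 = 0 from rfl]
  ring

lemma sE4 (d : Fin 6 → ℚ) : ∑ i, cartanE6 4 i * d i = -d 3 + 2*d 4 - d 5 := by
  rw [Fin.sum_univ_six]
  norm_num [show cartanE6 4 0 = 0 from rfl, show cartanE6 4 1 = 0 from rfl,
    show cartanE6 4 2 = 0 from rfl, show cartanE6 4 3 = -1 from rfl,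
    show cartanE6 4 4 = 2 from rfl, show cartanE6 4 5 = -1 from rfl]
  ring

lemma sE5 (d : Fin 6 → ℚ) : ∑ i, cartanE6 5 i * d i = -d 4 + 2*d 5 := by
  rw [Fin.sum_univ_six]
  norm_num [show cartanE6 5 0 = 0 from rfl, show cartanE6 5 1 = 0 from rfl,
    show cartanE6 5 2 = 0 from rfl, show cartanE6 5 3 = 0 from rfl,
    show cartanE6 5 4 = -1 from rfl, show cartanE6 5 5 = 2 from rfl]

/-- Type `E_6`: the vector `c* = e_1 − (1/2) A e_1` lies in `B(E_6)`, and for every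
`c ∈ B(E_6)` with `c ≠ e_1`, writing `e_1 − c = A d`, one has `d_1 ≥ 1/2`; consequently
`c* − c = A (d − (1/2) e_1)` with `d − (1/2) e_1` entrywise nonnegative, i.e. `c*` is the
greatest element of `B(E_6) ∖ {e_1}` in the dominance order. -/
theorem E6_half_coroot_maximal :
    ((fun j => muE6 j - (1 / 2) * cartanE6 j 0) ∈ BsetE6) ∧
    ∀ c ∈ BsetE6, c ≠ muE6 →
      ∀ d : Fin 6 → ℚ, (∀ j, muE6 j - c j = ∑ i, cartanE6 j i * d i) →
        1 / 2 ≤ d 0 ∧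
        (∀ i, 0 ≤ d i - (1 / 2) * muE6 i) ∧
        (∀ j, (muE6 j - (1 / 2) * cartanE6 j 0) - c j
            = ∑ i, cartanE6 j i * (d i - (1 / 2) * muE6 i)) := by
  constructor
  · refine ⟨fun j => ?_, fun i => if i = 0 then 1/2 else 0, fun i => ?_, fun j => ?_,
      fun j hj => ?_⟩
    · fin_cases j <;> norm_num [muE6, cartanE6, Fin.ext_iff]
    · dsimp only; split <;> norm_num
    · fin_cases j <;> simp [muE6, cartanE6, Fin.sum_univ_six]
    · have h0 : (fun j => muE6 j - 1 / 2 * cartanE6 j 0) (0:Fin 6) = 0 := by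
        show muE6 0 - 1/2 * cartanE6 0 0 = 0
        rw [show muE6 0 = (1:ℚ) from rfl, show cartanE6 0 0 = (2:ℚ) from rfl]; norm_num
      have h1 : (fun j => muE6 j - 1 / 2 * cartanE6 j 0) (1:Fin 6) = 0 := by
        show muE6 1 - 1/2 * cartanE6 1 0 = 0
        rw [show muE6 1 = (0:ℚ) from rfl, show cartanE6 1 0 = (0:ℚ) from rfl]; norm_num
      have h3 : (fun j => muE6 j - 1 / 2 * cartanE6 j 0) (3:Fin 6) = 0 := by
        show muE6 3 - 1/2 * cartanE6 3 0 = 0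
        rw [show muE6 3 = (0:ℚ) from rfl, show cartanE6 3 0 = (0:ℚ) from rfl]; norm_num
      have h4 : (fun j => muE6 j - 1 / 2 * cartanE6 j 0) (4:Fin 6) = 0 := by
        show muE6 4 - 1/2 * cartanE6 4 0 = 0
        rw [show muE6 4 = (0:ℚ) from rfl, show cartanE6 4 0 = (0:ℚ) from rfl]; norm_num
      have h5 : (fun j => muE6 j - 1 / 2 * cartanE6 j 0) (5:Fin 6) = 0 := by
        show muE6 5 - 1/2 * cartanE6 5 0 = 0
        rw [show muE6 5 = (0:ℚ) from rfl, show cartanE6 5 0 = (0:ℚ) from rfl]; norm_num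
      fin_cases j
      · exact absurd h0 hj
      · exact absurd h1 hj
      · exact ⟨0, by norm_num [Fin.ext_iff]⟩
      · exact absurd h3 hj
      · exact absurd h4 hj
      · exact absurd h5 hj
  · rintro c ⟨hc0, d', hd'0, hd'eq, hd'int⟩ hne d hd
    have e0 : 1 - c 0 = 2*d 0 - d 2 := by
      have h := hd 0; rw [sE0 d, show muE6 0 = (1:ℚ) from rfl] at h; linarith
    have e1 : -(c 1) = 2*d 1 - d 3 := by
      have h := hd 1; rw [sE1 d, show muE6 1 = (0:ℚ) from rfl] at h; linarith
    have e2 : -(c 2) = -d 0 + 2*d 2 - d 3 := by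
      have h := hd 2; rw [sE2 d, show muE6 2 = (0:ℚ) from rfl] at h; linarith
    have e3 : -(c 3) = -d 1 - d 2 + 2*d 3 - d 4 := by
      have h := hd 3; rw [sE3 d, show muE6 3 = (0:ℚ) from rfl] at h; linarith
    have e4 : -(c 4) = -d 3 + 2*d 4 - d 5 := by
      have h := hd 4; rw [sE4 d, show muE6 4 = (0:ℚ) from rfl] at h; linarith
    have e5 : -(c 5) = -d 4 + 2*d 5 := by
      have h := hd 5; rw [sE5 d, show muE6 5 = (0:ℚ) from rfl] at h; linarith
    have f0 : 1 - c 0 = 2*d' 0 - d' 2 := by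
      have h := hd'eq 0; rw [sE0 d', show muE6 0 = (1:ℚ) from rfl] at h; linarith
    have f1 : -(c 1) = 2*d' 1 - d' 3 := by
      have h := hd'eq 1; rw [sE1 d', show muE6 1 = (0:ℚ) from rfl] at h; linarith
    have f2 : -(c 2) = -d' 0 + 2*d' 2 - d' 3 := by
      have h := hd'eq 2; rw [sE2 d', show muE6 2 = (0:ℚ) from rfl] at h; linarith
    have f3 : -(c 3) = -d' 1 - d' 2 + 2*d' 3 - d' 4 := by
      have h := hd'eq 3; rw [sE3 d', show muE6 3 = (0:ℚ) from rfl] at h; linarith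
    have f4 : -(c 4) = -d' 3 + 2*d' 4 - d' 5 := by
      have h := hd'eq 4; rw [sE4 d', show muE6 4 = (0:ℚ) from rfl] at h; linarith
    have f5 : -(c 5) = -d' 4 + 2*d' 5 := by
      have h := hd'eq 5; rw [sE5 d', show muE6 5 = (0:ℚ) from rfl] at h; linarith
    -- uniqueness: d = d'
    have q0 : d 0 = d' 0 := by linarith
    have q1 : d 1 = d' 1 := by linarith
    have q2 : d 2 = d' 2 := by linarith
    have q3 : d 3 = d' 3 := by linarith
    have q4 : d 4 = d' 4 := by linarith
    have q5 : d 5 = d' 5 := by linarith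
    have hd0 : 1/2 ≤ d 0 := by
      by_cases h : c 0 = 0
      · rw [h] at e0
        have := hd'0 2
        linarith
      · obtain ⟨m, hm⟩ := hd'int 0 h
        by_contra hlt
        push_neg at hlt
        have hmlt : (m : ℚ) < 1/2 := by rw [← hm, ← q0]; exact hlt
        have hmge : (0 : ℚ) ≤ (m : ℚ) := by rw [← hm]; exact hd'0 0
        have hm0 : m = 0 := by
          have h1 : (m : ℚ) < 1 := by linarith
          have h2 : m < 1 := by exact_mod_cast h1
          have h3 : 0 ≤ m := by exact_mod_cast hmge
          omega
        have z0 : d' 0 = 0 := by rw [hm, hm0]; norm_num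
        have z5 : d' 5 = 0 := by linarith [hc0 0, hc0 1, hc0 2, hc0 3, hc0 4, hc0 5, hd'0 0, hd'0 1, hd'0 2, hd'0 3, hd'0 4, hd'0 5]
        have z4 : d' 4 = 0 := by linarith [hc0 0, hc0 1, hc0 2, hc0 3, hc0 4, hc0 5, hd'0 0, hd'0 1, hd'0 2, hd'0 3, hd'0 4, hd'0 5]
        have z3 : d' 3 = 0 := by linarith [hc0 0, hc0 1, hc0 2, hc0 3, hc0 4, hc0 5, hd'0 0, hd'0 1, hd'0 2, hd'0 3, hd'0 4, hd'0 5]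
        have z1 : d' 1 = 0 := by linarith [hc0 0, hc0 1, hc0 2, hc0 3, hc0 4, hc0 5, hd'0 0, hd'0 1, hd'0 2, hd'0 3, hd'0 4, hd'0 5]
        have z2 : d' 2 = 0 := by linarith [hc0 0, hc0 1, hc0 2, hc0 3, hc0 4, hc0 5, hd'0 0, hd'0 1, hd'0 2, hd'0 3, hd'0 4, hd'0 5]
        have hcm : c = muE6 := by
          have g0 : c 0 = muE6 0 := by rw [show muE6 0 = (1:ℚ) from rfl]; linarith
          have g1 : c 1 = muE6 1 := by rw [show muE6 1 = (0:ℚ) from rfl]; linarith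
          have g2 : c 2 = muE6 2 := by rw [show muE6 2 = (0:ℚ) from rfl]; linarith
          have g3 : c 3 = muE6 3 := by rw [show muE6 3 = (0:ℚ) from rfl]; linarith
          have g4 : c 4 = muE6 4 := by rw [show muE6 4 = (0:ℚ) from rfl]; linarith
          have g5 : c 5 = muE6 5 := by rw [show muE6 5 = (0:ℚ) from rfl]; linarith
          funext j
          fin_cases j
          · exact g0
          · exact g1
          · exact g2
          · exact g3
          · exact g4
          · exact g5
        exact hne hcm
    refine ⟨hd0, fun i => ?_, fun j => ?_⟩
    · have g0 : 0 ≤ d 0 - (1/2) * muE6 0 := by rw [show muE6 0 = (1:ℚ) from rfl]; linarith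
      have g1 : 0 ≤ d 1 - (1/2) * muE6 1 := by rw [show muE6 1 = (0:ℚ) from rfl]; linarith [hd'0 1]
      have g2 : 0 ≤ d 2 - (1/2) * muE6 2 := by rw [show muE6 2 = (0:ℚ) from rfl]; linarith [hd'0 2]
      have g3 : 0 ≤ d 3 - (1/2) * muE6 3 := by rw [show muE6 3 = (0:ℚ) from rfl]; linarith [hd'0 3]
      have g4 : 0 ≤ d 4 - (1/2) * muE6 4 := by rw [show muE6 4 = (0:ℚ) from rfl]; linarith [hd'0 4]
      have g5 : 0 ≤ d 5 - (1/2) * muE6 5 := by rw [show muE6 5 = (0:ℚ) from rfl]; linarith [hd'0 5]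
      fin_cases i
      · exact g0
      · exact g1
      · exact g2
      · exact g3
      · exact g4
      · exact g5
    · set D : Fin 6 → ℚ := fun i => d i - (1/2) * muE6 i with hD
      have hD0 : D 0 = d 0 - 1/2 := by simp only [hD]; rw [show muE6 0 = (1:ℚ) from rfl]; ring
      have hD1 : D 1 = d 1 := by simp only [hD]; rw [show muE6 1 = (0:ℚ) from rfl]; ring
      have hD2 : D 2 = d 2 := by simp only [hD]; rw [show muE6 2 = (0:ℚ) from rfl]; ring
      have hD3 : D 3 = d 3 := by simp only [hD]; rw [show muE6 3 = (0:ℚ) from rfl]; ring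
      have hD4 : D 4 = d 4 := by simp only [hD]; rw [show muE6 4 = (0:ℚ) from rfl]; ring
      have hD5 : D 5 = d 5 := by simp only [hD]; rw [show muE6 5 = (0:ℚ) from rfl]; ring
      have g0 : (muE6 0 - (1/2) * cartanE6 0 0) - c 0 = ∑ i, cartanE6 0 i * D i := by
        rw [sE0 D, hD0, hD2]
        rw [show muE6 0 = (1:ℚ) from rfl, show cartanE6 0 0 = (2:ℚ) from rfl]
        linarith
      have g1 : (muE6 1 - (1/2) * cartanE6 1 0) - c 1 = ∑ i, cartanE6 1 i * D i := by
        rw [sE1 D, hD1, hD3]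
        rw [show muE6 1 = (0:ℚ) from rfl, show cartanE6 1 0 = (0:ℚ) from rfl]
        linarith
      have g2 : (muE6 2 - (1/2) * cartanE6 2 0) - c 2 = ∑ i, cartanE6 2 i * D i := by
        rw [sE2 D, hD0, hD2, hD3]
        rw [show muE6 2 = (0:ℚ) from rfl, show cartanE6 2 0 = (-1:ℚ) from rfl]
        linarith
      have g3 : (muE6 3 - (1/2) * cartanE6 3 0) - c 3 = ∑ i, cartanE6 3 i * D i := by
        rw [sE3 D, hD1, hD2, hD3, hD4]
        rw [show muE6 3 = (0:ℚ) from rfl, show cartanE6 3 0 = (0:ℚ) from rfl]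
        linarith
      have g4 : (muE6 4 - (1/2) * cartanE6 4 0) - c 4 = ∑ i, cartanE6 4 i * D i := by
        rw [sE4 D, hD3, hD4, hD5]
        rw [show muE6 4 = (0:ℚ) from rfl, show cartanE6 4 0 = (0:ℚ) from rfl]
        linarith
      have g5 : (muE6 5 - (1/2) * cartanE6 5 0) - c 5 = ∑ i, cartanE6 5 i * D i := by
        rw [sE5 D, hD4, hD5]
        rw [show muE6 5 = (0:ℚ) from rfl, show cartanE6 5 0 = (0:ℚ) from rfl]
        linarith
      fin_cases j
      · exact g0
      · exact g1
      · exact g2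
      · exact g3
      · exact g4
      · exact g5
end

section
/- The vector c* := e_7 − (1/2) A e_7 lies in B(E_7), and for every c ∈ B(E_7) with c ≠ e_7, writing e_7 − c = A d, one has d_7 ≥ 1/2. Consequently c* − c = A(d − (1/2)e_7) with d − (1/2)e_7 entrywise nonnegative, i.e. c* is the greatest element of B(E_7) ∖ {e_7} in the dominance order (c ⪯ c' iff A^{-1}(c' − c) has all entries ≥ 0). -/
open Finset

/-- The Cartan matrix of type `E_7` in Bourbaki numbering (0-indexed: node `i` here is
Bourbaki node `i+1`); the edges of the Dynkin diagram are
`{1,3}, {3,4}, {4,5}, {5,6}, {6,7}, {2,4}` (Bourbaki), i.e.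
`{0,2}, {2,3}, {3,4}, {4,5}, {5,6}, {1,3}` (0-indexed). -/
def cartanE7 : Matrix (Fin 7) (Fin 7) ℚ :=
  fun i j =>
    if i = j then 2
    else if ((i : ℕ) = 0 ∧ (j : ℕ) = 2) ∨ ((i : ℕ) = 2 ∧ (j : ℕ) = 0)
        ∨ ((i : ℕ) = 2 ∧ (j : ℕ) = 3) ∨ ((i : ℕ) = 3 ∧ (j : ℕ) = 2)
        ∨ ((i : ℕ) = 3 ∧ (j : ℕ) = 4) ∨ ((i : ℕ) = 4 ∧ (j : ℕ) = 3)
        ∨ ((i : ℕ) = 4 ∧ (j : ℕ) = 5) ∨ ((i : ℕ) = 5 ∧ (j : ℕ) = 4)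
        ∨ ((i : ℕ) = 5 ∧ (j : ℕ) = 6) ∨ ((i : ℕ) = 6 ∧ (j : ℕ) = 5)
        ∨ ((i : ℕ) = 1 ∧ (j : ℕ) = 3) ∨ ((i : ℕ) = 3 ∧ (j : ℕ) = 1)
      then -1 else 0

/-- The minuscule fundamental coweight `μ̄ = e_7` of `E_7` (node 7 in Bourbaki numbering,
the unique minuscule node), in the coordinates given by the basis of fundamental
coweights. -/
def muE7 : Fin 7 → ℚ := fun j => if j = 6 then 1 else 0

/-- The Chen–Fargues–Shen description of the Kottwitz set `B(E_7)` for `μ̄ = e_7`: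
vectors `c ∈ ℚ^7` (coordinates in the basis of fundamental coweights) with
(i) `c_j ≥ 0` for all `j`, (ii) `e_7 − c = A d` with all `d_i ≥ 0`, and
(iii) `d_j ∈ ℤ` for every `j` with `c_j ≠ 0`. -/
def BsetE7 : Set (Fin 7 → ℚ) :=
  {c | (∀ j, 0 ≤ c j) ∧
    ∃ d : Fin 7 → ℚ, (∀ i, 0 ≤ d i) ∧
      (∀ j, muE7 j - c j = ∑ i, cartanE7 j i * d i) ∧
      (∀ j, c j ≠ 0 → ∃ m : ℤ, d j = (m : ℚ))}

section rows

private lemma finvals : ((0:Fin 7):ℕ)=0 ∧ ((1:Fin 7):ℕ)=1 ∧ ((2:Fin 7):ℕ)=2 ∧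
    ((3:Fin 7):ℕ)=3 ∧ ((4:Fin 7):ℕ)=4 ∧ ((5:Fin 7):ℕ)=5 ∧ ((6:Fin 7):ℕ)=6 :=
  ⟨rfl, rfl, rfl, rfl, rfl, rfl, rfl⟩

lemma rowE7_0 (d : Fin 7 → ℚ) : ∑ i, cartanE7 0 i * d i = 2*d 0 - d 2 := by
  simp only [Fin.sum_univ_seven, cartanE7]
  norm_num [Fin.ext_iff]
  all_goals ring

lemma rowE7_1 (d : Fin 7 → ℚ) : ∑ i, cartanE7 1 i * d i = 2*d 1 - d 3 := by
  simp only [Fin.sum_univ_seven, cartanE7]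
  norm_num [Fin.ext_iff]
  all_goals ring

lemma rowE7_2 (d : Fin 7 → ℚ) : ∑ i, cartanE7 2 i * d i = -d 0 + 2*d 2 - d 3 := by
  simp only [Fin.sum_univ_seven, cartanE7]
  norm_num [Fin.ext_iff]
  all_goals ring

lemma rowE7_3 (d : Fin 7 → ℚ) : ∑ i, cartanE7 3 i * d i = -d 1 - d 2 + 2*d 3 - d 4 := by
  simp only [Fin.sum_univ_seven, cartanE7]
  norm_num [Fin.ext_iff]
  all_goals ring

lemma rowE7_4 (d : Fin 7 → ℚ) : ∑ i, cartanE7 4 i * d i = -d 3 + 2*d 4 - d 5 := by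
  simp only [Fin.sum_univ_seven, cartanE7]
  norm_num [Fin.ext_iff]
  all_goals ring

lemma rowE7_5 (d : Fin 7 → ℚ) : ∑ i, cartanE7 5 i * d i = -d 4 + 2*d 5 - d 6 := by
  simp only [Fin.sum_univ_seven, cartanE7]
  norm_num [Fin.ext_iff]
  all_goals ring

lemma rowE7_6 (d : Fin 7 → ℚ) : ∑ i, cartanE7 6 i * d i = -d 5 + 2*d 6 := by
  simp only [Fin.sum_univ_seven, cartanE7]
  norm_num [Fin.ext_iff]
  all_goals ring


lemma fin7_cases (j : Fin 7) :
    j = 0 ∨ j = 1 ∨ j = 2 ∨ j = 3 ∨ j = 4 ∨ j = 5 ∨ j = 6 := by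
  revert j; decide

lemma muE7_vals : muE7 0 = 0 ∧ muE7 1 = 0 ∧ muE7 2 = 0 ∧ muE7 3 = 0 ∧ muE7 4 = 0 ∧
    muE7 5 = 0 ∧ muE7 6 = 1 := by
  refine ⟨?_, ?_, ?_, ?_, ?_, ?_, ?_⟩ <;> norm_num [muE7, Fin.ext_iff, finvals.1, finvals.2.1, finvals.2.2.1, finvals.2.2.2.1, finvals.2.2.2.2.1, finvals.2.2.2.2.2.1, finvals.2.2.2.2.2.2]

lemma cartanE7_col6 : cartanE7 0 6 = 0 ∧ cartanE7 1 6 = 0 ∧ cartanE7 2 6 = 0 ∧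
    cartanE7 3 6 = 0 ∧ cartanE7 4 6 = 0 ∧ cartanE7 5 6 = -1 ∧ cartanE7 6 6 = 2 := by
  refine ⟨?_, ?_, ?_, ?_, ?_, ?_, ?_⟩ <;>
    norm_num [cartanE7, finvals.1, finvals.2.1, finvals.2.2.1,
      finvals.2.2.2.1, finvals.2.2.2.2.1, finvals.2.2.2.2.2.1, finvals.2.2.2.2.2.2,
      Fin.ext_iff]

/-- The witness `d = (1/2) e_7` for the membership of `c*` in `B(E_7)`. -/
def dstarE7 : Fin 7 → ℚ := fun i => if i = 6 then 1/2 else 0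

lemma dstarE7_vals : dstarE7 0 = 0 ∧ dstarE7 1 = 0 ∧ dstarE7 2 = 0 ∧ dstarE7 3 = 0 ∧
    dstarE7 4 = 0 ∧ dstarE7 5 = 0 ∧ dstarE7 6 = 1/2 := by
  refine ⟨?_, ?_, ?_, ?_, ?_, ?_, ?_⟩ <;> norm_num [dstarE7, Fin.ext_iff, finvals.1, finvals.2.1, finvals.2.2.1, finvals.2.2.2.1, finvals.2.2.2.2.1, finvals.2.2.2.2.2.1, finvals.2.2.2.2.2.2]

end rows

/-- Type `E_7`: the vector `c* = e_7 − (1/2) A e_7` lies in `B(E_7)`, and for every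
`c ∈ B(E_7)` with `c ≠ e_7`, writing `e_7 − c = A d`, one has `d_7 ≥ 1/2`; consequently
`c* − c = A (d − (1/2) e_7)` with `d − (1/2) e_7` entrywise nonnegative, i.e. `c*` is the
greatest element of `B(E_7) ∖ {e_7}` in the dominance order. -/
theorem E7_half_coroot_maximal :
    ((fun j => muE7 j - (1 / 2) * cartanE7 j 6) ∈ BsetE7) ∧
    ∀ c ∈ BsetE7, c ≠ muE7 →
      ∀ d : Fin 7 → ℚ, (∀ j, muE7 j - c j = ∑ i, cartanE7 j i * d i) →
        1 / 2 ≤ d 6 ∧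
        (∀ i, 0 ≤ d i - (1 / 2) * muE7 i) ∧
        (∀ j, (muE7 j - (1 / 2) * cartanE7 j 6) - c j
            = ∑ i, cartanE7 j i * (d i - (1 / 2) * muE7 i)) := by
  obtain ⟨hm0, hm1, hm2, hm3, hm4, hm5, hm6⟩ := muE7_vals
  obtain ⟨ha0, ha1, ha2, ha3, ha4, ha5, ha6⟩ := cartanE7_col6
  obtain ⟨hs0, hs1, hs2, hs3, hs4, hs5, hs6⟩ := dstarE7_vals
  constructor
  · refine ⟨?_, dstarE7, ?_, ?_, ?_⟩
    · intro j
      rcases fin7_cases j with rfl | rfl | rfl | rfl | rfl | rfl | rfl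
      · show (0:ℚ) ≤ muE7 0 - 1/2 * cartanE7 0 6; rw [hm0, ha0]; norm_num
      · show (0:ℚ) ≤ muE7 1 - 1/2 * cartanE7 1 6; rw [hm1, ha1]; norm_num
      · show (0:ℚ) ≤ muE7 2 - 1/2 * cartanE7 2 6; rw [hm2, ha2]; norm_num
      · show (0:ℚ) ≤ muE7 3 - 1/2 * cartanE7 3 6; rw [hm3, ha3]; norm_num
      · show (0:ℚ) ≤ muE7 4 - 1/2 * cartanE7 4 6; rw [hm4, ha4]; norm_num
      · show (0:ℚ) ≤ muE7 5 - 1/2 * cartanE7 5 6; rw [hm5, ha5]; norm_num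
      · show (0:ℚ) ≤ muE7 6 - 1/2 * cartanE7 6 6; rw [hm6, ha6]; norm_num
    · intro i
      rcases fin7_cases i with rfl | rfl | rfl | rfl | rfl | rfl | rfl <;>
        [rw [hs0]; rw [hs1]; rw [hs2]; rw [hs3]; rw [hs4]; rw [hs5]; rw [hs6]] <;>
        norm_num
    · intro j
      rcases fin7_cases j with rfl | rfl | rfl | rfl | rfl | rfl | rfl
      · rw [rowE7_0 dstarE7]
        show muE7 0 - (muE7 0 - 1/2 * cartanE7 0 6) = _
        rw [hm0, ha0, hs0, hs2]; norm_num
      · rw [rowE7_1 dstarE7]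
        show muE7 1 - (muE7 1 - 1/2 * cartanE7 1 6) = _
        rw [hm1, ha1, hs1, hs3]; norm_num
      · rw [rowE7_2 dstarE7]
        show muE7 2 - (muE7 2 - 1/2 * cartanE7 2 6) = _
        rw [hm2, ha2, hs0, hs2, hs3]; norm_num
      · rw [rowE7_3 dstarE7]
        show muE7 3 - (muE7 3 - 1/2 * cartanE7 3 6) = _
        rw [hm3, ha3, hs1, hs2, hs3, hs4]; norm_num
      · rw [rowE7_4 dstarE7]
        show muE7 4 - (muE7 4 - 1/2 * cartanE7 4 6) = _
        rw [hm4, ha4, hs3, hs4, hs5]; norm_num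
      · rw [rowE7_5 dstarE7]
        show muE7 5 - (muE7 5 - 1/2 * cartanE7 5 6) = _
        rw [hm5, ha5, hs4, hs5, hs6]; norm_num
      · rw [rowE7_6 dstarE7]
        show muE7 6 - (muE7 6 - 1/2 * cartanE7 6 6) = _
        rw [hm6, ha6, hs5, hs6]; norm_num
    · intro j hj
      rcases fin7_cases j with rfl | rfl | rfl | rfl | rfl | rfl | rfl
      · exact absurd (show muE7 0 - 1/2 * cartanE7 0 6 = 0 by rw [hm0, ha0]; norm_num) hj
      · exact absurd (show muE7 1 - 1/2 * cartanE7 1 6 = 0 by rw [hm1, ha1]; norm_num) hj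
      · exact absurd (show muE7 2 - 1/2 * cartanE7 2 6 = 0 by rw [hm2, ha2]; norm_num) hj
      · exact absurd (show muE7 3 - 1/2 * cartanE7 3 6 = 0 by rw [hm3, ha3]; norm_num) hj
      · exact absurd (show muE7 4 - 1/2 * cartanE7 4 6 = 0 by rw [hm4, ha4]; norm_num) hj
      · exact ⟨0, by rw [hs5]; norm_num⟩
      · exact absurd (show muE7 6 - 1/2 * cartanE7 6 6 = 0 by rw [hm6, ha6]; norm_num) hj
  · rintro c ⟨hcnn, d', hd'nn, hd'eq, hint⟩ hne d hd
    have e0 := (hd 0).trans (rowE7_0 d); rw [hm0] at e0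
    have e1 := (hd 1).trans (rowE7_1 d); rw [hm1] at e1
    have e2 := (hd 2).trans (rowE7_2 d); rw [hm2] at e2
    have e3 := (hd 3).trans (rowE7_3 d); rw [hm3] at e3
    have e4 := (hd 4).trans (rowE7_4 d); rw [hm4] at e4
    have e5 := (hd 5).trans (rowE7_5 d); rw [hm5] at e5
    have e6 := (hd 6).trans (rowE7_6 d); rw [hm6] at e6
    have f0 := (hd'eq 0).trans (rowE7_0 d'); rw [hm0] at f0
    have f1 := (hd'eq 1).trans (rowE7_1 d'); rw [hm1] at f1
    have f2 := (hd'eq 2).trans (rowE7_2 d'); rw [hm2] at f2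
    have f3 := (hd'eq 3).trans (rowE7_3 d'); rw [hm3] at f3
    have f4 := (hd'eq 4).trans (rowE7_4 d'); rw [hm4] at f4
    have f5 := (hd'eq 5).trans (rowE7_5 d'); rw [hm5] at f5
    have f6 := (hd'eq 6).trans (rowE7_6 d'); rw [hm6] at f6
    have E0 : d 0 = d' 0 := by linarith
    have E1 : d 1 = d' 1 := by linarith
    have E2 : d 2 = d' 2 := by linarith
    have E3 : d 3 = d' 3 := by linarith
    have E4 : d 4 = d' 4 := by linarith
    have E5 : d 5 = d' 5 := by linarith
    have E6 : d 6 = d' 6 := by linarith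
    have hn0 := hd'nn 0; have hn1 := hd'nn 1; have hn2 := hd'nn 2; have hn3 := hd'nn 3
    have hn4 := hd'nn 4; have hn5 := hd'nn 5; have hn6 := hd'nn 6
    have hhalf : 1/2 ≤ d' 6 := by
      by_cases h7 : c 6 = 0
      · rw [h7] at f6; linarith
      · obtain ⟨m, hm⟩ := hint 6 h7
        by_contra hlt
        push_neg at hlt
        have hmz : m = 0 := by
          have h1 : (0:ℚ) ≤ (m:ℚ) := hm ▸ hn6
          have h2 : (m:ℚ) < 1 := by rw [← hm]; linarith
          have h1' : (0:ℤ) ≤ m := by exact_mod_cast h1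
          have h2' : m < 1 := by exact_mod_cast h2
          omega
        have hd6 : d' 6 = 0 := by rw [hm, hmz]; norm_num
        have hc0 := hcnn 0; have hc1 := hcnn 1; have hc2 := hcnn 2
        have hc3 := hcnn 3; have hc4 := hcnn 4; have hc5 := hcnn 5
        have z5 : d' 5 = 0 := by linarith
        have z4 : d' 4 = 0 := by linarith
        have z3 : d' 3 = 0 := by linarith
        have z2 : d' 2 = 0 := by linarith
        have z1 : d' 1 = 0 := by linarith
        have z0 : d' 0 = 0 := by linarith
        apply hne
        funext j
        rcases fin7_cases j with rfl | rfl | rfl | rfl | rfl | rfl | rfl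
        · rw [hm0]; linarith
        · rw [hm1]; linarith
        · rw [hm2]; linarith
        · rw [hm3]; linarith
        · rw [hm4]; linarith
        · rw [hm5]; linarith
        · rw [hm6]; linarith
    refine ⟨by rw [E6]; exact hhalf, ?_, ?_⟩
    · intro i
      rcases fin7_cases i with rfl | rfl | rfl | rfl | rfl | rfl | rfl
      · rw [hm0, E0]; linarith
      · rw [hm1, E1]; linarith
      · rw [hm2, E2]; linarith
      · rw [hm3, E3]; linarith
      · rw [hm4, E4]; linarith
      · rw [hm5, E5]; linarith
      · rw [hm6, E6]; linarith
    · intro j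
      rcases fin7_cases j with rfl | rfl | rfl | rfl | rfl | rfl | rfl
      · rw [rowE7_0 (fun i => d i - (1/2) * muE7 i)]
        simp only [hm0, hm2, ha0]; linarith
      · rw [rowE7_1 (fun i => d i - (1/2) * muE7 i)]
        simp only [hm1, hm3, ha1]; linarith
      · rw [rowE7_2 (fun i => d i - (1/2) * muE7 i)]
        simp only [hm0, hm2, hm3, ha2]; linarith
      · rw [rowE7_3 (fun i => d i - (1/2) * muE7 i)]
        simp only [hm1, hm2, hm3, hm4, ha3]; linarith
      · rw [rowE7_4 (fun i => d i - (1/2) * muE7 i)]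
        simp only [hm3, hm4, hm5, ha4]; linarith
      · rw [rowE7_5 (fun i => d i - (1/2) * muE7 i)]
        simp only [hm4, hm5, hm6, ha5]; linarith
      · rw [rowE7_6 (fun i => d i - (1/2) * muE7 i)]
        simp only [hm5, hm6, ha6]; linarith
end

section
/- Let r ≥ 2, let 1 ≥ λ_1 > λ_2 > ⋯ > λ_r ≥ 0 be real numbers and 0 = h_0 < h_1 < ⋯ < h_r natural numbers, and define d_j, δ and the function f as in the context. Then for every index 1 ≤ i ≤ r and all integers h, h' with 0 ≤ h < h_i < h' ≤ h_r and h + h' = 2h_i, one has f(h) + f(h') ≤ 2 d_i − 2δ. -/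
open Finset

set_option maxHeartbeats 1000000 in
/-- Numerical inequality underlying the uniqueness of canonical subgroups: with Newton slopes
`1 ≥ λ_1 > ⋯ > λ_r ≥ 0`, break-point heights `0 = h_0 < h_1 < ⋯ < h_r`, partial degrees
`d_j = Σ_{m=1}^{j} (h_m − h_{m−1}) λ_m`, the gap `δ = (1/4) min_m (λ_m − λ_{m+1})`, and the
piecewise linear concave Newton function `f` (with `f(h) = d_k + (h − h_k) λ_{k+1}` on
`[h_k, h_{k+1}]`), one has `f(h) + f(h') ≤ 2 d_i − 2δ` whenever
`0 ≤ h < h_i < h' ≤ h_r` and `h + h' = 2 h_i`. -/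
theorem newton_function_concavity_gap (r : ℕ) (hr : 2 ≤ r) (lam : ℕ → ℝ) (h : ℕ → ℕ)
    (hlam1 : lam 1 ≤ 1) (hlamr : 0 ≤ lam r)
    (hlamdec : ∀ m, 1 ≤ m → m < r → lam (m + 1) < lam m)
    (h0 : h 0 = 0) (hmono : ∀ m, m < r → h m < h (m + 1))
    (d : ℕ → ℝ)
    (hd : ∀ j, d j = ∑ m ∈ Finset.Icc 1 j, ((h m : ℝ) - (h (m - 1) : ℝ)) * lam m)
    (δ : ℝ)
    (hδ : δ = (1 / 4) *
      ((Finset.Icc 1 (r - 1)).inf' (Finset.nonempty_Icc.mpr (by omega))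
        fun m => lam m - lam (m + 1)))
    (f : ℕ → ℝ)
    (hf : ∀ k, k < r → ∀ x : ℕ, h k ≤ x → x ≤ h (k + 1) →
      f x = d k + ((x : ℝ) - (h k : ℝ)) * lam (k + 1)) :
    ∀ i, 1 ≤ i → i ≤ r → ∀ x y : ℕ,
      x < h i → h i < y → y ≤ h r → x + y = 2 * h i →
      f x + f y ≤ 2 * d i - 2 * δ := by
  -- lam is antitone on [1, r]
  have lam_anti : ∀ a b, 1 ≤ a → a ≤ b → b ≤ r → lam b ≤ lam a := by
    intro a b ha hab hbr
    induction b with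
    | zero => omega
    | succ n ih =>
      rcases Nat.eq_or_lt_of_le hab with rfl | hlt
      · exact le_rfl
      · have h1 : a ≤ n := by omega
        have := hlamdec n (by omega) (by omega)
        have := ih h1 (by omega)
        linarith
  -- h is monotone
  have h_mono : ∀ a b, a ≤ b → b ≤ r → h a ≤ h b := by
    intro a b hab hbr
    induction b with
    | zero =>
      have ha0 : a = 0 := by omega
      subst ha0
      exact le_rfl
    | succ n ih =>
      rcases Nat.eq_or_lt_of_le hab with rfl | hlt
      · exact le_rfl
      · have := hmono n (by omega)
        have := ih (by omega) (by omega)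
        omega
  -- step identity for d
  have d_step : ∀ k, d (k + 1) = d k + ((h (k+1) : ℝ) - (h k : ℝ)) * lam (k + 1) := by
    intro k
    rw [hd (k+1), hd k, Finset.sum_Icc_succ_top (by omega)]
    simp
  -- lower bound: d k + (h i - h k) lam i ≤ d i for k ≤ i ≤ r
  have d_lb : ∀ k i, k ≤ i → i ≤ r → d k + ((h i : ℝ) - (h k : ℝ)) * lam i ≤ d i := by
    intro k i hki hir
    induction i with
    | zero =>
      interval_cases k
      simp
    | succ n ih =>
      rcases Nat.eq_or_lt_of_le hki with rfl | hlt
      · simp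
      · have h1 : k ≤ n := by omega
        rcases Nat.eq_zero_or_pos n with rfl | hpos
        · have hk0 : k = 0 := by omega
          subst hk0
          rw [d_step 0]
        · have h2 := ih h1 (by omega)
          have h3 : lam (n+1) ≤ lam n := le_of_lt (hlamdec n hpos (by omega))
          have hk_n : (h k : ℝ) ≤ (h n : ℝ) := by
            exact_mod_cast h_mono k n h1 (by omega)
          have hn_n1 : (h n : ℝ) ≤ (h (n+1) : ℝ) := by
            exact_mod_cast le_of_lt (hmono n (by omega))
          rw [d_step n]
          nlinarith
  -- upper bound: d k ≤ d i + (h k - h i) * lam (i+1) for i ≤ k ≤ r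
  have d_ub : ∀ i k, i ≤ k → k ≤ r → d k ≤ d i + ((h k : ℝ) - (h i : ℝ)) * lam (i+1) := by
    intro i k hik hkr
    induction k with
    | zero =>
      interval_cases i
      simp
    | succ n ih =>
      rcases Nat.eq_or_lt_of_le hik with rfl | hlt
      · simp
      · have h1 : i ≤ n := by omega
        have h2 := ih h1 (by omega)
        have h3 : lam (n+1) ≤ lam (i+1) := lam_anti (i+1) (n+1) (by omega) (by omega) (by omega)
        have hi_n : (h i : ℝ) ≤ (h n : ℝ) := by
          exact_mod_cast h_mono i n h1 (by omega)
        have hn_n1 : (h n : ℝ) ≤ (h (n+1) : ℝ) := by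
          exact_mod_cast le_of_lt (hmono n (by omega))
        rw [d_step n]
        nlinarith
  intro i hi1 hir x y hx hy hyr hsum
  -- i < r since h i < y ≤ h r
  have hiltr : i < r := by
    by_contra hcon
    have : i = r := by omega
    subst this
    omega
  -- find segment containing x
  have findx : ∀ n, n ≤ r → x < h n → ∃ k, k < n ∧ h k ≤ x ∧ x < h (k+1) := by
    intro n
    induction n with
    | zero => intro _ hxx; rw [h0] at hxx; omega
    | succ m ih =>
      intro hm hxx
      rcases Nat.lt_or_ge x (h m) with h' | h'
      · obtain ⟨k, hk1, hk2, hk3⟩ := ih (by omega) h'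
        exact ⟨k, by omega, hk2, hk3⟩
      · exact ⟨m, by omega, h', hxx⟩
  -- find segment containing y
  have findy : ∀ n, i ≤ n → n ≤ r → y ≤ h n → ∃ k, i ≤ k ∧ k < n ∧ h k ≤ y ∧ y ≤ h (k+1) := by
    intro n
    induction n with
    | zero => intro h1 _ _; interval_cases i <;> omega
    | succ m ih =>
      intro h1 h2 h3
      rcases Nat.lt_or_ge (h m) y with h' | h'
      · have him : i ≤ m := by
          by_contra hcon
          have h5 : m + 1 ≤ i := by omega
          have h6 := h_mono (m+1) i h5 hir
          omega
        exact ⟨m, him, by omega, le_of_lt h', h3⟩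
      · have him : i ≤ m := by
          by_contra hcon
          have h5 : i = m + 1 := by omega
          subst h5
          have h6 := hmono m (by omega)
          omega
        obtain ⟨k, hk1, hk2, hk3, hk4⟩ := ih him (by omega) h'
        exact ⟨k, hk1, by omega, hk3, hk4⟩
  obtain ⟨k, hki, hkx, hkx'⟩ := findx i (by omega) hx
  obtain ⟨l, hli, hlr, hly, hly'⟩ := findy r (by omega) (le_refl r) hyr
  -- f values
  have fx : f x = d k + ((x:ℝ) - (h k:ℝ)) * lam (k+1) :=
    hf k (by omega) x hkx (by omega)
  have fy : f y = d l + ((y:ℝ) - (h l:ℝ)) * lam (l+1) :=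
    hf l hlr y hly hly'
  -- bound f x
  have hlamki : lam i ≤ lam (k+1) := lam_anti (k+1) i (by omega) (by omega) hir
  have hxk : (h k : ℝ) ≤ (x : ℝ) := by exact_mod_cast hkx
  have hxi : (x : ℝ) < (h i : ℝ) := by exact_mod_cast hx
  have fxb : f x ≤ d i - ((h i : ℝ) - (x:ℝ)) * lam i := by
    have h1 := d_lb (k+1) i (by omega) hir
    have h2 := d_step k
    have hxk1 : (x:ℝ) ≤ (h (k+1):ℝ) := by exact_mod_cast le_of_lt hkx'
    have hprod : 0 ≤ ((h (k+1):ℝ) - (x:ℝ)) * (lam (k+1) - lam i) :=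
      mul_nonneg (by linarith) (by linarith)
    rw [fx]
    nlinarith
  -- bound f y
  have hlamli : lam (l+1) ≤ lam (i+1) := lam_anti (i+1) (l+1) (by omega) (by omega) (by omega)
  have hyl : (h l : ℝ) ≤ (y : ℝ) := by exact_mod_cast hly
  have hyi : (h i : ℝ) < (y : ℝ) := by exact_mod_cast hy
  have fyb : f y ≤ d i + ((y:ℝ) - (h i:ℝ)) * lam (i+1) := by
    have h1 := d_ub i l hli (by omega)
    have hprod : 0 ≤ ((y:ℝ) - (h l:ℝ)) * (lam (i+1) - lam (l+1)) :=
      mul_nonneg (by linarith) (by linarith)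
    rw [fy]
    nlinarith
  -- δ bounds
  have hmem : i ∈ Finset.Icc 1 (r-1) := by
    simp only [Finset.mem_Icc]; omega
  have hinf : ((Finset.Icc 1 (r - 1)).inf' (Finset.nonempty_Icc.mpr (by omega))
      fun m => lam m - lam (m + 1)) ≤ lam i - lam (i+1) :=
    Finset.inf'_le _ hmem
  have hδpos : 0 ≤ δ := by
    rw [hδ]
    have : (0:ℝ) ≤ (Finset.Icc 1 (r - 1)).inf' (Finset.nonempty_Icc.mpr (by omega))
        fun m => lam m - lam (m + 1) := by
      apply Finset.le_inf'
      intro b hb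
      simp only [Finset.mem_Icc] at hb
      have := hlamdec b hb.1 (by omega)
      linarith
    linarith
  have h4δ : 4 * δ ≤ lam i - lam (i+1) := by rw [hδ]; linarith
  -- arithmetic finish
  have hamt : (1:ℝ) ≤ (h i : ℝ) - (x : ℝ) := by
    have : x + 1 ≤ h i := hx
    have : ((x:ℝ) + 1) ≤ (h i : ℝ) := by exact_mod_cast this
    linarith
  have hsym : (y:ℝ) - (h i:ℝ) = (h i:ℝ) - (x:ℝ) := by
    have : (x:ℝ) + (y:ℝ) = 2 * (h i:ℝ) := by exact_mod_cast hsum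
    linarith
  rw [hsym] at fyb
  have hgap : 0 ≤ lam i - lam (i+1) := by linarith
  have hprod := mul_le_mul_of_nonneg_right hamt hgap
  nlinarith [fxb, fyb, h4δ, hδpos, hamt, hprod]
end
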